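/- arXiv:2304.14615 — 7 statements merged into one kernel-verified Lean document; each statement's English description precedes it below -/
import Mathlib

section
/- Every bijection m : {0,1}^n → {0,1}^n that preserves the Hamming distance (i.e., h(m(x), m(y)) = h(x,y) for all x,y) can be written uniquely as m = q_z ∘ r_σ, where q_z(x) = x ⊕ z for some fixed z ∈ {0,1}^n and r_σ permutes the bits of its input according to some permutation σ of the n bit positions. -/
open Finset

namespace HDPaux

variable {n : ℕ}

def e (j : Fin n) : Fin n → Bool := fun i => decide (i = j)

lemma hd_card (x y : Fin n → Bool) :
    hammingDist x y = (univ.filter fun i => x i ≠ y i).card := rfl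

lemma hd_xor (x y z : Fin n → Bool) :
    hammingDist (fun i => xor (x i) (z i)) (fun i => xor (y i) (z i)) = hammingDist x y := by
  rw [hd_card, hd_card]
  congr 1
  apply Finset.filter_congr
  intro i _
  cases x i <;> cases y i <;> cases z i <;> simp

lemma key (x : Fin n → Bool) (j : Fin n) :
    hammingDist x (e j) + 2 * (x j).toNat = hammingDist x (fun _ => false) + 1 := by
  rw [hd_card, hd_card, Finset.card_filter, Finset.card_filter,
    Finset.sum_eq_sum_sdiff_singleton_add (mem_univ j),
    Finset.sum_eq_sum_sdiff_singleton_add (mem_univ j)]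
  have hs : ∀ i ∈ univ \ {j},
      (if x i ≠ e j i then 1 else 0) = if x i ≠ false then 1 else 0 := by
    intro i hi
    simp only [mem_sdiff, mem_singleton] at hi
    simp [e, hi.2]
  rw [Finset.sum_congr rfl hs]
  have : e j j = true := by simp [e]
  rw [this]
  cases hxj : x j <;> simp [hxj]

lemma wt_one (v : Fin n → Bool) (hv : hammingDist v (fun _ => false) = 1) :
    ∃ j, v = e j := by
  rw [hd_card] at hv
  obtain ⟨a, ha⟩ := Finset.card_eq_one.mp hv
  use a
  funext k
  have hk : v k = true ↔ k = a := by
    constructor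
    · intro h
      have h2 : k ∈ univ.filter fun i => v i ≠ false := by simp [h]
      rw [ha] at h2; simpa using h2
    · intro h; subst h
      have h2 : k ∈ univ.filter fun i => v i ≠ false := by rw [ha]; simp
      simp only [mem_filter] at h2
      simpa using h2.2
  simp only [e]
  cases hvk : v k
  · rw [hvk] at hk; simp at hk
    simp [hk]
  · rw [hvk] at hk; simp at hk
    simp [hk]

end HDPaux

/-- Every Hamming-distance-preserving bijection of `{0,1}^n` is uniquely of the form
`q_z ∘ r_σ`, i.e. `m x = fun i => xor (x (σ i)) (z i)`. -/
theorem hammingDist_preserving_decomposition (n : ℕ)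
    (m : (Fin n → Bool) → (Fin n → Bool)) (hm : Function.Bijective m)
    (hpres : ∀ x y, hammingDist (m x) (m y) = hammingDist x y) :
    ∃! p : (Fin n → Bool) × Equiv.Perm (Fin n),
      ∀ x, m x = fun i => xor (x (p.2 i)) (p.1 i) := by
  classical
  set z : Fin n → Bool := m (fun _ => false) with hz
  set m' : (Fin n → Bool) → (Fin n → Bool) := fun x i => xor (m x i) (z i) with hm'def
  have hm'pres : ∀ x y, hammingDist (m' x) (m' y) = hammingDist x y := by
    intro x y
    have h := HDPaux.hd_xor (m x) (m y) z
    simpa [hm'def] using h.trans (hpres x y)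
  have hm'0 : m' (fun _ => false) = fun _ => false := by
    funext i; simp [hm'def, ← hz]
  have hwt : ∀ x, hammingDist (m' x) (fun _ => false) = hammingDist x (fun _ => false) := by
    intro x
    have h := hm'pres x (fun _ => false)
    rwa [hm'0] at h
  have he1 : ∀ j : Fin n, hammingDist (HDPaux.e j) (fun _ => false) = 1 := by
    intro j
    rw [HDPaux.hd_card]
    have : (Finset.univ.filter fun i => HDPaux.e j i ≠ false) = {j} := by
      ext i; simp [HDPaux.e]
    rw [this]; simp
  have hτ' : ∀ j : Fin n, ∃ i, m' (HDPaux.e j) = HDPaux.e i := by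
    intro j
    apply HDPaux.wt_one
    rw [hwt, he1]
  choose τ hτ using hτ'
  have einj : Function.Injective (HDPaux.e (n := n)) := by
    intro a b hab
    have h := congrFun hab a
    simp [HDPaux.e] at h
    exact h
  have hm'inj : Function.Injective m' := by
    intro a b h
    apply hm.injective
    funext i
    have h2 := congrFun h i
    simp only [hm'def] at h2
    cases hzi : z i <;> rw [hzi] at h2 <;> simpa using h2
  have τinj : Function.Injective τ := by
    intro a b h
    apply einj
    apply hm'inj
    rw [hτ a, hτ b, h]
  let T : Equiv.Perm (Fin n) := Equiv.ofBijective τ (Finite.injective_iff_bijective.mp τinj)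
  have hT : ∀ j, T j = τ j := fun j => rfl
  have hpt : ∀ x j, m' x (τ j) = x j := by
    intro x j
    have h1 := HDPaux.key (m' x) (τ j)
    have h2 := HDPaux.key x j
    rw [← hτ j, hm'pres, hwt] at h1
    have h3 : (m' x (τ j)).toNat = (x j).toNat := by omega
    cases hb : m' x (τ j) <;> cases hc : x j <;> rw [hb, hc] at h3 <;> simp_all
  have hmx : ∀ x, m x = fun i => xor (x (T.symm i)) (z i) := by
    intro x
    funext i
    have h1 : m' x i = x (T.symm i) := by
      have := hpt x (T.symm i)
      rwa [← hT, T.apply_symm_apply] at this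
    have h2 : m x i = xor (m' x i) (z i) := by
      simp only [hm'def]
      cases z i <;> simp
    rw [h2, h1]
  refine ⟨⟨z, T.symm⟩, hmx, ?_⟩
  rintro ⟨z', σ'⟩ h'
  have hz' : z' = z := by
    have h0 := h' (fun _ => false)
    rw [← hz] at h0
    funext i
    have := congrFun h0 i
    simpa using this.symm
  have hσ' : ∀ j, σ'.symm j = τ j := by
    intro j
    apply einj
    rw [← hτ j]
    funext i
    have h2 := congrFun (h' (HDPaux.e j)) i
    have h3 : m' (HDPaux.e j) i = HDPaux.e j (σ' i) := by
      simp only [hm'def]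
      rw [h2, hz']
      cases hzz : z i <;> simp [hzz]
    rw [h3]
    simp only [HDPaux.e, decide_eq_decide]
    exact Equiv.eq_symm_apply σ'
  have hσeq : σ' = T.symm := by
    apply Equiv.ext
    intro i
    apply σ'.symm.injective
    rw [σ'.symm_apply_apply, hσ' (T.symm i), ← hT, T.apply_symm_apply]
  simp only [Prod.mk.injEq]
  exact ⟨hz', hσeq⟩
end

section
/- Let Φ(ρ) = ∑_a D_a ρ D_a† be a completely positive map on 2^n × 2^n matrices such that ⟨i|Φ(|x⟩⟨y|)|j⟩ = 0 whenever h(i,j) ≠ h(x,y). Then for any positive semidefinite ρ with entries ρ_{xy}, and for every pair (i,j), one has |⟨i|Φ(ρ)|j⟩| ≤ ∑'_{x,y} |ρ_{xy}| √(p_{i|x} p_{j|y}), where p_{i|x} = ⟨i|Φ(|x⟩⟨x|)|i⟩ and the primed sum runs over all pairs (x,y) with h(x,y) = h(i,j). -/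
/-!
Writing `Φ = ∑ₐ Dₐ (·) Dₐᴴ`, the entry `⟨i|Φ(ρ)|j⟩` is `∑_{x,y} ρ_{xy} c_{xy}` with
`c_{xy} = ∑ₐ (Dₐ)_{ix} conj (Dₐ)_{jy} = ⟨i|Φ(|x⟩⟨y|)|j⟩`. The Hamming-distance condition kills
every `c_{xy}` with `h(x,y) ≠ h(i,j)`, and since `p_{i|x} = ∑ₐ |(Dₐ)_{ix}|²`, Cauchy–Schwarz over
the Kraus index bounds the others by `√(p_{i|x} p_{j|y})`.
-/

open scoped Matrix ComplexOrder

namespace Matrix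

variable {ι α 𝕜 : Type*} [Fintype α] [RCLike 𝕜]

/-- `krausCoeff D i j x y = ⟨i|Φ(|x⟩⟨y|)|j⟩` for the Kraus map `Φ ρ = ∑ a, D a * ρ * (D a)ᴴ`. -/
def krausCoeff (D : α → Matrix ι ι 𝕜) (i j x y : ι) : 𝕜 :=
  ∑ a, D a i x * star (D a j y)

theorem sum_mul_mul_conjTranspose_apply [Fintype ι] (D : α → Matrix ι ι 𝕜) (ρ : Matrix ι ι 𝕜)
    (i j : ι) : (∑ a, D a * ρ * (D a)ᴴ) i j = ∑ x, ∑ y, ρ x y * krausCoeff D i j x y := by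
  simp only [sum_apply, mul_apply, conjTranspose_apply, krausCoeff, Finset.sum_mul,
    Finset.mul_sum]
  conv_rhs => rw [Finset.sum_comm]
  rw [Finset.sum_comm]
  refine Finset.sum_congr rfl fun y _ => ?_
  rw [Finset.sum_comm]
  exact Finset.sum_congr rfl fun x _ => Finset.sum_congr rfl fun a _ => by ring

theorem sum_mul_single_mul_conjTranspose_apply [Fintype ι] [DecidableEq ι]
    (D : α → Matrix ι ι 𝕜) (i j x y : ι) :
    (∑ a, D a * single x y (1 : 𝕜) * (D a)ᴴ) i j = krausCoeff D i j x y := by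
  simp [sum_mul_mul_conjTranspose_apply, single_apply, ite_and]

theorem krausCoeff_self (D : α → Matrix ι ι 𝕜) (i x : ι) :
    krausCoeff D i i x x = ((∑ a, ‖D a i x‖ ^ 2 : ℝ) : 𝕜) := by
  simp [krausCoeff, RCLike.star_def, RCLike.mul_conj]

theorem norm_krausCoeff_le (D : α → Matrix ι ι 𝕜) (i j x y : ι) :
    ‖krausCoeff D i j x y‖ ≤ √(∑ a, ‖D a i x‖ ^ 2) * √(∑ a, ‖D a j y‖ ^ 2) :=
  calc ‖krausCoeff D i j x y‖ ≤ ∑ a, ‖D a i x‖ * ‖D a j y‖ :=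
        (norm_sum_le _ _).trans_eq (by simp only [norm_mul, norm_star])
    _ ≤ _ := Real.sum_mul_le_sqrt_mul_sqrt _ _ _

end Matrix

theorem hdp_cp_map_entry_bound_general (n m : ℕ)
    (D : Fin m → Matrix (Fin n → Bool) (Fin n → Bool) ℂ)
    (Φ : Matrix (Fin n → Bool) (Fin n → Bool) ℂ → Matrix (Fin n → Bool) (Fin n → Bool) ℂ)
    (hΦ : ∀ ρ, Φ ρ = ∑ a, D a * ρ * (D a)ᴴ)
    (hHDP : ∀ i j x y : Fin n → Bool, hammingDist i j ≠ hammingDist x y →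
      Φ (Matrix.single x y 1) i j = 0)
    (p : (Fin n → Bool) → (Fin n → Bool) → ℝ)
    (hp : ∀ i x, p i x = (Φ (Matrix.single x x 1) i i).re)
    (ρ : Matrix (Fin n → Bool) (Fin n → Bool) ℂ)
    (i j : Fin n → Bool) :
    ‖Φ ρ i j‖ ≤
      ∑ x : Fin n → Bool, ∑ y : Fin n → Bool,
        if hammingDist x y = hammingDist i j then
          ‖ρ x y‖ * Real.sqrt (p i x * p j y) else 0 := by
  have hp_eq : ∀ k x, p k x = ∑ a, ‖D a k x‖ ^ 2 := fun k x => by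
    rw [hp, hΦ, Matrix.sum_mul_single_mul_conjTranspose_apply, Matrix.krausCoeff_self]
    exact Complex.ofReal_re _
  have hcoeff : ∀ x y, hammingDist x y ≠ hammingDist i j → Matrix.krausCoeff D i j x y = 0 :=
    fun x y h => by
      rw [← Matrix.sum_mul_single_mul_conjTranspose_apply, ← hΦ]
      exact hHDP i j x y (Ne.symm h)
  rw [hΦ, Matrix.sum_mul_mul_conjTranspose_apply]
  refine (norm_sum_le _ _).trans <| Finset.sum_le_sum fun x _ =>
    (norm_sum_le _ _).trans <| Finset.sum_le_sum fun y _ => ?_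
  split_ifs with h
  · rw [norm_mul, hp_eq, hp_eq, Real.sqrt_mul (by positivity)]
    gcongr
    exact Matrix.norm_krausCoeff_le D i j x y
  · simp [hcoeff x y h]

/-- Entrywise Cauchy–Schwarz bound for Hamming-distance-preserving CP maps
(Proposition 2 of the paper). -/
theorem hdp_cp_map_entry_bound (n m : ℕ)
    (D : Fin m → Matrix (Fin n → Bool) (Fin n → Bool) ℂ)
    (Φ : Matrix (Fin n → Bool) (Fin n → Bool) ℂ → Matrix (Fin n → Bool) (Fin n → Bool) ℂ)
    (hΦ : ∀ ρ, Φ ρ = ∑ a, D a * ρ * (D a)ᴴ)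
    (hHDP : ∀ i j x y : Fin n → Bool, hammingDist i j ≠ hammingDist x y →
      Φ (Matrix.single x y 1) i j = 0)
    (p : (Fin n → Bool) → (Fin n → Bool) → ℝ)
    (hp : ∀ i x, p i x = (Φ (Matrix.single x x 1) i i).re)
    (ρ : Matrix (Fin n → Bool) (Fin n → Bool) ℂ) (hρ : ρ.PosSemidef)
    (i j : Fin n → Bool) :
    ‖Φ ρ i j‖ ≤
      ∑ x : Fin n → Bool, ∑ y : Fin n → Bool,
        if hammingDist x y = hammingDist i j then
          ‖ρ x y‖ * Real.sqrt (p i x * p j y) else 0 :=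
  hdp_cp_map_entry_bound_general n m D Φ hΦ hHDP p hp ρ i j
end

section
/- Let K be a 2^n × 2^n complex matrix such that for all n-bit strings i, j, x, y with h(i,j) ≠ h(x,y) one has ⟨i|K|x⟩ · (⟨j|K|y⟩)* = 0. Then K has at most one nonzero entry in each row and each column, and there exists a partially defined injective function f on the set of columns with a nonzero entry such that K = ∑_x c_x |f(x)⟩⟨x| with h(x,y) = h(f(x),f(y)) whenever c_x and c_y are both nonzero. -/
/-- Structure of Kraus operators of selectively Hamming distance preserving operations
(Proposition 3 of the paper). -/
theorem shp_kraus_structure (n : ℕ)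
    (K : Matrix (Fin n → Bool) (Fin n → Bool) ℂ)
    (hK : ∀ i j x y : Fin n → Bool, hammingDist i j ≠ hammingDist x y →
      K i x * star (K j y) = 0) :
    (∀ x i i' : Fin n → Bool, K i x ≠ 0 → K i' x ≠ 0 → i = i') ∧
    (∀ i x x' : Fin n → Bool, K i x ≠ 0 → K i x' ≠ 0 → x = x') ∧
    ∃ (f : (Fin n → Bool) → (Fin n → Bool)) (c : (Fin n → Bool) → ℂ),
      (∀ i x : Fin n → Bool, K i x = if i = f x then c x else 0) ∧
      Set.InjOn f {x | c x ≠ 0} ∧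
      (∀ x y : Fin n → Bool, c x ≠ 0 → c y ≠ 0 →
        hammingDist x y = hammingDist (f x) (f y)) := by
  classical
  have col : ∀ x i i' : Fin n → Bool, K i x ≠ 0 → K i' x ≠ 0 → i = i' := by
    intro x i i' hi hi'
    by_contra hne
    have hd : hammingDist i i' ≠ hammingDist x x := by
      simp [hammingDist_self, hammingDist_eq_zero, hne]
    exact mul_ne_zero hi (star_ne_zero.mpr hi') (hK i i' x x hd)
  have row : ∀ i x x' : Fin n → Bool, K i x ≠ 0 → K i x' ≠ 0 → x = x' := by
    intro i x x' hx hx'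
    by_contra hne
    have hd : hammingDist i i ≠ hammingDist x x' := by
      simpa [hammingDist_self, eq_comm] using hne
    exact mul_ne_zero hx (star_ne_zero.mpr hx') (hK i i x x' hd)
  refine ⟨col, row, ?_⟩
  set f : (Fin n → Bool) → (Fin n → Bool) :=
    fun x => if h : ∃ i, K i x ≠ 0 then h.choose else x with hf
  set c : (Fin n → Bool) → ℂ := fun x => K (f x) x with hc
  have key : ∀ i x, K i x = if i = f x then c x else 0 := by
    intro i x
    by_cases hi : K i x = 0
    · split
      · next h => show K i x = c x; rw [h]
      · exact hi
    · have hex : ∃ j, K j x ≠ 0 := ⟨i, hi⟩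
      have hfx : f x = hex.choose := by simp [hf, hex]
      have : i = f x := by rw [hfx]; exact col x i _ hi hex.choose_spec
      simp [this, hc]
  refine ⟨f, c, key, ?_, ?_⟩
  · intro x hx y hy hxy
    have hx' : K (f x) x ≠ 0 := hx
    have hy' : K (f x) y ≠ 0 := by rw [hxy]; exact hy
    exact row (f x) x y hx' hy'
  · intro x y hx hy
    by_contra hd
    exact mul_ne_zero hx (star_ne_zero.mpr hy)
      (hK (f x) (f y) x y (fun h => hd h.symm))
end

section
/- Fix n, phases η_x, φ_x ∈ [0, 2π) and nonnegative reals ψ_x with ∑_x ψ_x = 1, indexed by n-bit strings x. For each n-bit string z define the 2^n × 2^n matrix K_z = ∑_x e^{−i(φ_x − η_{q(z,x)})} √ψ_x |x⟩⟨q(z,x)|, where q(z,x) = z ⊕ x (bitwise XOR). Then: (a) ∑_z K_z† K_z = I; (b) each K_z maps the uniform superposition |+⟩ = 2^{−n/2} ∑_y e^{−iη_y}|y⟩ to 2^{−n/2} |ψ⟩ where |ψ⟩ = ∑_x e^{−iφ_x} √ψ_x |x⟩; hence ∑_z K_z |+⟩⟨+| K_z† = |ψ⟩⟨ψ|. -/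
/-! Each `K_z` is a weighted permutation matrix, sending `|z ⊕ x⟩` to a phase times
`√ψ_x |x⟩`. Hence `K_z† K_z` is diagonal with entries `ψ_{z ⊕ b}`, which sum over `z` to
`∑ ψ = 1`. The phase `η_{z ⊕ x}` built into `K_z` cancels the phase of `|+⟩` at the same index,
so every `K_z` sends `|+⟩` to `2^{-n/2} |ψ⟩`, and the `2^n` equal rank-one terms add up to
`|ψ⟩⟨ψ|`. Only the group structure of `⊕` matters: the same construction works over any finite
additive group. -/

open scoped Matrix

namespace Matrix

theorem mul_vecMulVec_star_mul_conjTranspose {ι κ α : Type*} [Fintype ι] [Fintype κ]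
    [Semiring α] [StarRing α] (M : Matrix κ ι α) (u : ι → α) :
    M * vecMulVec u (star u) * Mᴴ = vecMulVec (M *ᵥ u) (star (M *ᵥ u)) := by
  rw [mul_vecMulVec, vecMulVec_mul, vecMul_conjTranspose, star_star]

variable {ι α : Type*} [Fintype ι] [DecidableEq ι]

section NonAssocSemiring

variable [NonAssocSemiring α] (σ : ι → ι) (c : ι → α)

theorem sum_smul_single_apply (a b : ι) :
    (∑ x, c x • single x (σ x) (1 : α)) a b = if b = σ a then c a else 0 := by
  simp only [sum_apply, smul_apply, single_apply, smul_eq_mul, mul_ite, mul_one, mul_zero,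
    ite_and]
  rw [Finset.sum_ite_eq' Finset.univ a]
  simp [eq_comm]

theorem sum_smul_single_mulVec (v : ι → α) :
    (∑ x, c x • single x (σ x) (1 : α)) *ᵥ v = fun a => c a * v (σ a) := by
  ext a
  simp only [mulVec, dotProduct, sum_smul_single_apply, ite_mul, zero_mul]
  rw [Finset.sum_ite_eq' Finset.univ (σ a), if_pos (Finset.mem_univ _)]

end NonAssocSemiring

theorem conjTranspose_mul_sum_smul_single [Semiring α] [StarRing α] (σ : ι ≃ ι)
    (c : ι → α) :
    (∑ x, c x • single x (σ x) (1 : α))ᴴ * (∑ x, c x • single x (σ x) 1) =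
      diagonal fun b => star (c (σ.symm b)) * c (σ.symm b) := by
  ext b b'
  simp only [mul_apply, conjTranspose_apply, sum_smul_single_apply, diagonal_apply]
  rw [Finset.sum_eq_single (σ.symm b)]
  · simp only [Equiv.apply_symm_apply, if_true]
    split_ifs with h₁ h₂ h₂ <;> simp_all
  · intro a _ ha
    rw [if_neg (by rintro rfl; simp at ha), star_zero, zero_mul]
  · simp

end Matrix

open Complex in
theorem Complex.star_mul_self_exp_mul_sqrt (θ : ℝ) {r : ℝ} (hr : 0 ≤ r) :
    star (exp (-(θ * I)) * (√r : ℂ)) * (exp (-(θ * I)) * √r) = r := by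
  rw [star_def, conj_mul', ← neg_mul, ← ofReal_neg, norm_mul, norm_exp_ofReal_mul_I, one_mul,
    norm_real, Real.norm_of_nonneg (Real.sqrt_nonneg r), ← ofReal_pow, Real.sq_sqrt hr]

section ShiftKraus

variable {G : Type*} [AddGroup G] [Fintype G] [DecidableEq G]

noncomputable def shiftKraus (η φ ψ : G → ℝ) (z : G) : Matrix G G ℂ :=
  ∑ x, (Complex.exp (-(↑(φ x - η (z + x)) * Complex.I)) * (√(ψ x) : ℂ)) •
    Matrix.single x (Equiv.addLeft z x) 1

theorem shiftKraus_conjTranspose_mul_self (η φ ψ : G → ℝ) (hψ : ∀ x, 0 ≤ ψ x) (z : G) :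
    (shiftKraus η φ ψ z)ᴴ * shiftKraus η φ ψ z =
      Matrix.diagonal fun b => (ψ (-z + b) : ℂ) := by
  rw [shiftKraus, Matrix.conjTranspose_mul_sum_smul_single]
  simp only [Equiv.addLeft_symm, Equiv.coe_addLeft, Complex.star_mul_self_exp_mul_sqrt _ (hψ _)]

theorem sum_shiftKraus_conjTranspose_mul_self (η φ ψ : G → ℝ) (hψ : ∀ x, 0 ≤ ψ x)
    (hψ1 : ∑ x, ψ x = 1) : ∑ z, (shiftKraus η φ ψ z)ᴴ * shiftKraus η φ ψ z = 1 := by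
  have hshift : ∀ b, ∑ z, ψ (-z + b) = 1 := fun b =>
    (Equiv.sum_comp ((Equiv.neg G).trans (Equiv.addRight b)) ψ).trans hψ1
  calc ∑ z, (shiftKraus η φ ψ z)ᴴ * shiftKraus η φ ψ z
      = ∑ z, Matrix.diagonal fun b => (ψ (-z + b) : ℂ) := by
        simp only [shiftKraus_conjTranspose_mul_self η φ ψ hψ]
    _ = Matrix.diagonal fun b => ∑ z, (ψ (-z + b) : ℂ) := by
        rw [← Finset.sum_fn]
        exact (map_sum (Matrix.diagonalAddMonoidHom G ℂ) (fun z b => (ψ (-z + b) : ℂ)) _).symm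
    _ = 1 := by simp_rw [← Complex.ofReal_sum, hshift, Complex.ofReal_one, Matrix.diagonal_one]

theorem shiftKraus_mulVec (η φ ψ : G → ℝ) (r : ℝ) (z : G) :
    shiftKraus η φ ψ z *ᵥ (fun y => (r : ℂ) * Complex.exp (-(↑(η y) * Complex.I))) =
      r • fun x => Complex.exp (-(↑(φ x) * Complex.I)) * (√(ψ x) : ℂ) := by
  ext x
  rw [shiftKraus, Matrix.sum_smul_single_mulVec]
  simp only [Equiv.coe_addLeft, Pi.smul_apply, Complex.real_smul]
  have hphase : Complex.exp (-(↑(φ x - η (z + x)) * Complex.I)) *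
      Complex.exp (-(↑(η (z + x)) * Complex.I)) = Complex.exp (-(↑(φ x) * Complex.I)) := by
    rw [← Complex.exp_add]; push_cast; ring_nf
  linear_combination (√(ψ x) : ℂ) * r * hphase

end ShiftKraus

theorem uniform_superposition_golden_state_general (n : ℕ)
    (η φ : (Fin n → Bool) → ℝ)
    (ψ : (Fin n → Bool) → ℝ) (hψ : ∀ x, 0 ≤ ψ x) (hψ1 : ∑ x, ψ x = 1)
    (q : (Fin n → Bool) → (Fin n → Bool) → (Fin n → Bool))
    (hq : ∀ z x, q z x = fun m => xor (z m) (x m))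
    (K : (Fin n → Bool) → Matrix (Fin n → Bool) (Fin n → Bool) ℂ)
    (hK : ∀ z, K z = ∑ x : Fin n → Bool,
      (Complex.exp (-(↑(φ x - η (q z x)) * Complex.I)) * (Real.sqrt (ψ x) : ℂ)) •
        Matrix.single x (q z x) 1)
    (plus : (Fin n → Bool) → ℂ)
    (hplus : ∀ y, plus y = ((Real.sqrt (2 ^ n))⁻¹ : ℝ) * Complex.exp (-(↑(η y) * Complex.I)))
    (ψvec : (Fin n → Bool) → ℂ)
    (hψvec : ∀ x, ψvec x = Complex.exp (-(↑(φ x) * Complex.I)) * (Real.sqrt (ψ x) : ℂ)) :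
    (∑ z : Fin n → Bool, (K z)ᴴ * K z = 1) ∧
    (∀ z : Fin n → Bool, (K z).mulVec plus = ((Real.sqrt (2 ^ n))⁻¹ : ℝ) • ψvec) ∧
    (∑ z : Fin n → Bool, K z * Matrix.vecMulVec plus (star ∘ plus) * (K z)ᴴ
      = Matrix.vecMulVec ψvec (star ∘ ψvec)) := by
  -- Bitwise XOR is the addition of the Boolean ring `Fin n → Bool`.
  obtain rfl : K = shiftKraus η φ ψ := funext fun z => by rw [hK]; simp only [hq]; rfl
  obtain rfl : plus = _ := funext hplus
  obtain rfl : ψvec = _ := funext hψvec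
  have hKplus := shiftKraus_mulVec η φ ψ (√(2 ^ n))⁻¹
  have hnorm : (2 : ℝ) ^ n * ((√(2 ^ n))⁻¹) ^ 2 = 1 := by
    rw [inv_pow, Real.sq_sqrt (by positivity), mul_inv_cancel₀ (by positivity)]
  refine ⟨sum_shiftKraus_conjTranspose_mul_self η φ ψ hψ hψ1, hKplus, ?_⟩
  change ∑ z, _ * Matrix.vecMulVec _ (star _) * _ = Matrix.vecMulVec _ (star _)
  simp_rw [Matrix.mul_vecMulVec_star_mul_conjTranspose, hKplus, star_smul, star_trivial,
    Matrix.smul_vecMulVec, Matrix.vecMulVec_smul, smul_smul, Finset.sum_const, Finset.card_univ]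
  rw [← Nat.cast_smul_eq_nsmul ℝ, ← sq, Fintype.card_fun, Fintype.card_bool,
    Fintype.card_fin, Nat.cast_pow, Nat.cast_ofNat, smul_smul, hnorm, one_smul]

/-- Explicit SHP channel transforming the uniform superposition state into an arbitrary
pure state (Proposition 4 of the paper). -/
theorem uniform_superposition_golden_state (n : ℕ)
    (η φ : (Fin n → Bool) → ℝ)
    (hη : ∀ x, η x ∈ Set.Ico (0 : ℝ) (2 * Real.pi))
    (hφ : ∀ x, φ x ∈ Set.Ico (0 : ℝ) (2 * Real.pi))
    (ψ : (Fin n → Bool) → ℝ) (hψ : ∀ x, 0 ≤ ψ x) (hψ1 : ∑ x, ψ x = 1)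
    (q : (Fin n → Bool) → (Fin n → Bool) → (Fin n → Bool))
    (hq : ∀ z x, q z x = fun m => xor (z m) (x m))
    (K : (Fin n → Bool) → Matrix (Fin n → Bool) (Fin n → Bool) ℂ)
    (hK : ∀ z, K z = ∑ x : Fin n → Bool,
      (Complex.exp (-(↑(φ x - η (q z x)) * Complex.I)) * (Real.sqrt (ψ x) : ℂ)) •
        Matrix.single x (q z x) 1)
    (plus : (Fin n → Bool) → ℂ)
    (hplus : ∀ y, plus y = ((Real.sqrt (2 ^ n))⁻¹ : ℝ) * Complex.exp (-(↑(η y) * Complex.I)))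
    (ψvec : (Fin n → Bool) → ℂ)
    (hψvec : ∀ x, ψvec x = Complex.exp (-(↑(φ x) * Complex.I)) * (Real.sqrt (ψ x) : ℂ)) :
    (∑ z : Fin n → Bool, (K z)ᴴ * K z = 1) ∧
    (∀ z : Fin n → Bool, (K z).mulVec plus = ((Real.sqrt (2 ^ n))⁻¹ : ℝ) • ψvec) ∧
    (∑ z : Fin n → Bool, K z * Matrix.vecMulVec plus (star ∘ plus) * (K z)ᴴ
      = Matrix.vecMulVec ψvec (star ∘ ψvec)) :=
  uniform_superposition_golden_state_general n η φ ψ hψ hψ1 q hq K hK plus hplus ψvec hψvec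
end

section
/- Let r, z, r', z' be real numbers with r, r' ≥ 0, and let θ_0, θ_1 ∈ [0, π/2]. Suppose r' = r cos(θ_0 − θ_1) and (1+z')/2 = cos²θ_0 (1+z)/2 + sin²θ_1 (1−z)/2 with |z| ≤ 1. Then z'² ≤ 1 − (1−z²) cos²(θ_0 − θ_1); equivalently cos²(θ_0 − θ_1) ≤ min{1, (1−z'²)/(1−z²)} when |z| < 1. -/
/-- Key algebraic inequality underlying the single-qubit HDP cone
(Corollary 1 of the paper). -/
theorem hdp_cone_inequality (r z r' z' θ₀ θ₁ : ℝ)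
    (hr : 0 ≤ r) (hr' : 0 ≤ r')
    (hθ₀ : θ₀ ∈ Set.Icc (0 : ℝ) (Real.pi / 2)) (hθ₁ : θ₁ ∈ Set.Icc (0 : ℝ) (Real.pi / 2))
    (hrr : r' = r * Real.cos (θ₀ - θ₁))
    (hz : (1 + z') / 2 = Real.cos θ₀ ^ 2 * ((1 + z) / 2) + Real.sin θ₁ ^ 2 * ((1 - z) / 2))
    (hzb : |z| ≤ 1) :
    z' ^ 2 ≤ 1 - (1 - z ^ 2) * Real.cos (θ₀ - θ₁) ^ 2 ∧
    (|z| < 1 → Real.cos (θ₀ - θ₁) ^ 2 ≤ min 1 ((1 - z' ^ 2) / (1 - z ^ 2))) := by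
  have hc : Real.cos (θ₀ - θ₁) = Real.cos θ₀ * Real.cos θ₁ + Real.sin θ₀ * Real.sin θ₁ :=
    Real.cos_sub θ₀ θ₁
  have p0 : Real.sin θ₀ ^ 2 + Real.cos θ₀ ^ 2 = 1 := Real.sin_sq_add_cos_sq θ₀
  have p1 : Real.sin θ₁ ^ 2 + Real.cos θ₁ ^ 2 = 1 := Real.sin_sq_add_cos_sq θ₁
  have hz' : z' = Real.cos θ₀ ^ 2 * (1 + z) + Real.sin θ₁ ^ 2 * (1 - z) - 1 := by linarith
  have key : z' ^ 2 ≤ 1 - (1 - z ^ 2) * Real.cos (θ₀ - θ₁) ^ 2 := by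
    rw [hc, hz']
    set s0 := Real.sin θ₀
    set c0 := Real.cos θ₀
    set s1 := Real.sin θ₁
    set c1 := Real.cos θ₁
    have ident : 1 - (1 - z ^ 2) * (c0 * c1 + s0 * s1) ^ 2
        - (c0 ^ 2 * (1 + z) + s1 ^ 2 * (1 - z) - 1) ^ 2
        = (s0 * c0 * (1 + z) - s1 * c1 * (1 - z)) ^ 2 := by
      linear_combination (-s1 ^ 2 - c0 ^ 2 - 2 * z * c0 ^ 2 + z ^ 2 * s1 ^ 2
          - z ^ 2 * c0 ^ 2) * p0
        + (-s1 ^ 2 - c0 ^ 2 + 2 * z * s1 ^ 2 - z ^ 2 * s1 ^ 2 + z ^ 2 * c0 ^ 2) * p1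
    nlinarith [ident, sq_nonneg (s0 * c0 * (1 + z) - s1 * c1 * (1 - z))]
  refine ⟨key, fun hlt => ?_⟩
  have hz2 : 0 < 1 - z ^ 2 := by
    have := abs_lt.mp hlt
    nlinarith [this.1, this.2]
  refine le_min ?_ ?_
  · nlinarith [Real.neg_one_le_cos (θ₀ - θ₁), Real.cos_le_one (θ₀ - θ₁)]
  · rw [le_div_iff₀ hz2]
    nlinarith [key]
end

section
/- For all real θ > 0, all r with 0 < r ≤ 1 and all z with z² < 1 and r² + z² ≤ 1, the inequality 3/(r² e^{−2θ}) − 4/(4 − r²) + 1/(1 − z²) ≥ 0 holds; equivalently, r² e^{−2θ}(1−z²)/(1 − z² − r² e^{−2θ}) ≥ (r²/4) e^{−2θ}(1 − r²/4)/(1 − r²/4 − (r²/4) e^{−2θ}). -/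
/-- The channel `Z` of Appendix A does not increase the single-qubit
dephasing-estimation QFI. -/
theorem qfi_nonincreasing_inequality (θ r z : ℝ)
    (hθ : 0 < θ) (hr : 0 < r) (hr1 : r ≤ 1) (hz : z ^ 2 < 1) (hrz : r ^ 2 + z ^ 2 ≤ 1) :
    3 / (r ^ 2 * Real.exp (-2 * θ)) - 4 / (4 - r ^ 2) + 1 / (1 - z ^ 2) ≥ 0 ∧
    r ^ 2 * Real.exp (-2 * θ) * (1 - z ^ 2) / (1 - z ^ 2 - r ^ 2 * Real.exp (-2 * θ)) ≥
      (r ^ 2 / 4) * Real.exp (-2 * θ) * (1 - r ^ 2 / 4) /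
        (1 - r ^ 2 / 4 - (r ^ 2 / 4) * Real.exp (-2 * θ)) := by
  set E := Real.exp (-2 * θ) with hE
  have hE0 : 0 < E := Real.exp_pos _
  have hE1 : E < 1 := by
    rw [hE]; apply Real.exp_lt_one_iff.mpr; linarith
  have hr2 : 0 < r ^ 2 := by positivity
  have hr21 : r ^ 2 ≤ 1 := by nlinarith
  have hz2 : 0 ≤ z ^ 2 := sq_nonneg z
  have hd1 : 0 < 1 - z ^ 2 - r ^ 2 * E := by nlinarith
  have hd2 : 0 < 1 - r ^ 2 / 4 - r ^ 2 / 4 * E := by nlinarith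
  constructor
  · have h1 : 3 / (r ^ 2 * E) ≥ 3 / (r ^ 2) := by
      apply div_le_div_of_nonneg_left (by norm_num) (by positivity)
      nlinarith
    have h2 : 3 / (r ^ 2) ≥ 3 := by
      rw [ge_iff_le, le_div_iff₀ hr2]; nlinarith
    have h3 : 4 / (4 - r ^ 2) ≤ 4 / 3 := by
      apply div_le_div_of_nonneg_left (by norm_num) (by norm_num) <;> nlinarith
    have hzpos : (0:ℝ) < 1 - z ^ 2 := by linarith
    have h4 : 0 < 1 / (1 - z ^ 2) := by positivity
    linarith
  · rw [ge_iff_le, div_le_div_iff₀ hd2 hd1]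
    nlinarith [mul_pos hr2 hE0, sq_nonneg (r^2*E), mul_nonneg (mul_pos hr2 hE0).le hz2,
      mul_nonneg (mul_nonneg (mul_pos hr2 hE0).le hz2) hE0.le,
      mul_nonneg (mul_pos hr2 hE0).le hd1.le, mul_nonneg (mul_pos hr2 hE0).le hd2.le]
end

section
/- Let ρ be a 2^n × 2^n density matrix with a nonzero off-diagonal entry ρ_{xy} = |ρ_{xy}| e^{−iβ} ≠ 0 for some n-bit strings x ≠ y, let θ > 0, and let ρ(θ) be the dephased state with entries ρ(θ)_{uv} = e^{−h(u,v)θ} ρ_{uv}. Consider the POVM M_1 = ½(|x⟩⟨x| + e^{−iβ}|x⟩⟨y| + e^{iβ}|y⟩⟨x| + |y⟩⟨y|), M_2 = ½(|x⟩⟨x| − e^{−iβ}|x⟩⟨y| − e^{iβ}|y⟩⟨x| + |y⟩⟨y|), M_3 = I − |x⟩⟨x| − |y⟩⟨y|, with outcome probabilities p(a|θ) = tr(ρ(θ)M_a). Then p(1|θ) = ½(ρ_{xx} + ρ_{yy} + 2|ρ_{xy}|e^{−h(x,y)θ}), p(2|θ) = ½(ρ_{xx} + ρ_{yy} − 2|ρ_{xy}|e^{−h(x,y)θ}),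 both are strictly positive, and the classical Fisher information F(θ) = ∑_a (∂_θ p(a|θ))²/p(a|θ) = [h(x,y)|ρ_{xy}|e^{−h(x,y)θ}]²(1/p(1|θ) + 1/p(2|θ)) is strictly positive. -/
open scoped Matrix ComplexOrder

/-!
Choosing `β` as the phase of `ρ x y` makes `e^{iβ} ρ(θ)_{xy}` and `e^{-iβ} ρ(θ)_{yx}` both equal to
the real number `|ρ_{xy}| e^{-h(x,y)θ}`, so the two-level POVM elements read off
`(ρ_{xx} + ρ_{yy})/2 ± |ρ_{xy}| e^{-h(x,y)θ}`. Only `p₂ > 0` needs an argument: the `2 × 2`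
principal minor of `ρ` at `{x, y}` is positive semidefinite, so `|ρ_{xy}|² ≤ ρ_{xx} ρ_{yy}` and hence
`ρ_{xx} + ρ_{yy} ≥ 2|ρ_{xy}| > 2|ρ_{xy}| e^{-h(x,y)θ}`, the last step because `h(x,y) θ > 0`.
-/

namespace Complex

open ComplexConjugate

theorem exp_mul_eq_norm_of_eq_norm_mul_exp {z : ℂ} {β : ℝ} (h : z = ‖z‖ * exp (-(β * I))) :
    exp (β * I) * z = ‖z‖ := by
  conv_lhs => rw [h]
  rw [mul_left_comm, ← exp_add, add_neg_cancel, exp_zero, mul_one]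

theorem exp_neg_mul_conj_eq_norm_of_eq_norm_mul_exp {z : ℂ} {β : ℝ}
    (h : z = ‖z‖ * exp (-(β * I))) : exp (-(β * I)) * conj z = ‖z‖ := by
  simpa [← exp_conj] using congrArg conj (exp_mul_eq_norm_of_eq_norm_mul_exp h)

end Complex

namespace Matrix

variable {𝕜 : Type*} [RCLike 𝕜] {m : Type*}

theorem PosSemidef.norm_apply_sq_le {A : Matrix m m 𝕜} (hA : A.PosSemidef) (i j : m) :
    ‖A i j‖ ^ 2 ≤ RCLike.re (A i i) * RCLike.re (A j j) := by
  have hdet := (hA.submatrix ![i, j]).det_nonneg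
  simp only [det_fin_two, submatrix_apply, cons_val_zero, cons_val_one] at hdet
  rw [← hA.isHermitian.apply j i, ← hA.isHermitian.coe_re_apply_self i,
    ← hA.isHermitian.coe_re_apply_self j, RCLike.star_def, RCLike.mul_conj] at hdet
  exact sub_nonneg.mp (mod_cast hdet)

theorem PosSemidef.two_mul_norm_apply_le {A : Matrix m m 𝕜} (hA : A.PosSemidef) (i j : m) :
    2 * ‖A i j‖ ≤ RCLike.re (A i i) + RCLike.re (A j j) := by
  have hi : 0 ≤ RCLike.re (A i i) := RCLike.nonneg_iff.mp hA.diag_nonneg |>.1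
  have hj : 0 ≤ RCLike.re (A j j) := RCLike.nonneg_iff.mp hA.diag_nonneg |>.1
  nlinarith [hA.norm_apply_sq_le i j, sq_nonneg (RCLike.re (A i i) - RCLike.re (A j j)),
    norm_nonneg (A i j)]

theorem trace_mul_two_level {R : Type*} [CommRing R] [Fintype m] [DecidableEq m]
    (A : Matrix m m R) (i j : m) (a b : R) :
    (A * (single i i 1 + a • single i j 1 + b • single j i 1 + single j j 1)).trace
      = A i i + a * A j i + b * A i j + A j j := by
  simp only [mul_add, Matrix.mul_smul, trace_add, trace_smul, trace_mul_single,
    MulOpposite.op_one, one_smul, smul_eq_mul]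

open Complex in
theorem trace_mul_phase_measurement [Fintype m] [DecidableEq m]
    (A : Matrix m m ℂ) {i j : m} {β : ℝ} {r : ℂ}
    (hij : exp (β * I) * A i j = r) (hji : exp (-(β * I)) * A j i = r) (s : ℂ) :
    (A * (1 / 2 : ℂ) • (single i i 1 + (s * exp (-(β * I))) • single i j 1
      + (s * exp (β * I)) • single j i 1 + single j j 1)).trace
      = (A i i + A j j) / 2 + s * r := by
  rw [Matrix.mul_smul, trace_smul, trace_mul_two_level, smul_eq_mul]
  linear_combination (s / 2) * (hji + hij)

end Matrix

theorem nonzero_coherence_positive_fisher_information_general (n : ℕ)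
    (ρ : Matrix (Fin n → Bool) (Fin n → Bool) ℂ)
    (hρ : ρ.PosSemidef)
    (x y : Fin n → Bool) (hxy : x ≠ y) (hxy0 : ρ x y ≠ 0)
    (β : ℝ) (hβ : ρ x y = (‖ρ x y‖ : ℂ) * Complex.exp (-(↑β * Complex.I)))
    (θ : ℝ) (hθ : 0 < θ)
    (ρθ : Matrix (Fin n → Bool) (Fin n → Bool) ℂ)
    (hρθ : ρθ = Matrix.of fun u v => (Real.exp (-(hammingDist u v : ℝ) * θ) : ℂ) * ρ u v)
    (M₁ M₂ : Matrix (Fin n → Bool) (Fin n → Bool) ℂ)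
    (hM₁ : M₁ = (1 / 2 : ℂ) • (Matrix.single x x 1
      + Complex.exp (-(↑β * Complex.I)) • Matrix.single x y 1
      + Complex.exp (↑β * Complex.I) • Matrix.single y x 1
      + Matrix.single y y 1))
    (hM₂ : M₂ = (1 / 2 : ℂ) • (Matrix.single x x 1
      - Complex.exp (-(↑β * Complex.I)) • Matrix.single x y 1
      - Complex.exp (↑β * Complex.I) • Matrix.single y x 1
      + Matrix.single y y 1))
    (p₁ p₂ : ℝ)
    (hp₁ : p₁ = ((ρ x x).re + (ρ y y).re) / 2
      + ‖ρ x y‖ * Real.exp (-(hammingDist x y : ℝ) * θ))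
    (hp₂ : p₂ = ((ρ x x).re + (ρ y y).re) / 2
      - ‖ρ x y‖ * Real.exp (-(hammingDist x y : ℝ) * θ)) :
    (ρθ * M₁).trace = (p₁ : ℂ) ∧ (ρθ * M₂).trace = (p₂ : ℂ) ∧
    0 < p₁ ∧ 0 < p₂ ∧
    0 < ((hammingDist x y : ℝ) * ‖ρ x y‖
          * Real.exp (-(hammingDist x y : ℝ) * θ)) ^ 2 * (1 / p₁ + 1 / p₂) := by
  set d : ℝ := (hammingDist x y : ℝ)
  set E : ℝ := Real.exp (-d * θ)
  have hd : 0 < d := Nat.cast_pos.mpr (hammingDist_pos.mpr hxy)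
  have hE : E < 1 := Real.exp_lt_one_iff.mpr (by nlinarith)
  have hr : 0 < ‖ρ x y‖ := norm_pos_iff.mpr hxy0
  have hcoh : 2 * ‖ρ x y‖ ≤ (ρ x x).re + (ρ y y).re := hρ.two_mul_norm_apply_le x y
  have hphase_xy : Complex.exp (β * Complex.I) * ρθ x y = ‖ρ x y‖ * E := by
    simp only [hρθ, Matrix.of_apply]
    rw [mul_left_comm, Complex.exp_mul_eq_norm_of_eq_norm_mul_exp hβ, mul_comm]
  have hphase_yx : Complex.exp (-(β * Complex.I)) * ρθ y x = ‖ρ x y‖ * E := by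
    simp only [hρθ, Matrix.of_apply, hammingDist_comm y x, ← hρ.isHermitian.apply y x]
    rw [mul_left_comm, RCLike.star_def, Complex.exp_neg_mul_conj_eq_norm_of_eq_norm_mul_exp hβ,
      mul_comm]
  have hdiag (u : Fin n → Bool) : ρθ u u = (ρ u u).re := by
    simpa [hρθ] using (hρ.isHermitian.coe_re_apply_self u).symm
  have htrace := ρθ.trace_mul_phase_measurement hphase_xy hphase_yx
  have hp₁pos : 0 < p₁ := by nlinarith [mul_pos hr (Real.exp_pos (-d * θ))]
  have hp₂pos : 0 < p₂ := by nlinarith [mul_pos hr (sub_pos.mpr hE)]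
  refine ⟨?_, ?_, hp₁pos, hp₂pos, by positivity⟩
  -- `M₁` and `M₂` are the phase measurements with sign `s = 1` and `s = -1`
  · rw [hM₁, ← one_mul (Complex.exp _), ← one_mul (Complex.exp (_ * _)), htrace, hdiag, hdiag,
      hp₁]
    push_cast
    ring
  · rw [hM₂, sub_eq_add_neg, sub_eq_add_neg, ← neg_smul, ← neg_smul, ← neg_one_mul,
      ← neg_one_mul (Complex.exp (_ * _)), htrace, hdiag, hdiag, hp₂]
    push_cast
    ring

/-- Every state with a nonzero off-diagonal entry has strictly positive Fisher
information for dephasing estimation: the explicit POVM `{M₁, M₂, M₃}` yields outcome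
probabilities `p(1|θ), p(2|θ)` of the stated form, both strictly positive, and the
classical Fisher information is strictly positive. -/
theorem nonzero_coherence_positive_fisher_information (n : ℕ)
    (ρ : Matrix (Fin n → Bool) (Fin n → Bool) ℂ)
    (hρ : ρ.PosSemidef) (hρ1 : ρ.trace = 1)
    (x y : Fin n → Bool) (hxy : x ≠ y) (hxy0 : ρ x y ≠ 0)
    (β : ℝ) (hβ : ρ x y = (‖ρ x y‖ : ℂ) * Complex.exp (-(↑β * Complex.I)))
    (θ : ℝ) (hθ : 0 < θ)
    (ρθ : Matrix (Fin n → Bool) (Fin n → Bool) ℂ)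
    (hρθ : ρθ = Matrix.of fun u v => (Real.exp (-(hammingDist u v : ℝ) * θ) : ℂ) * ρ u v)
    (M₁ M₂ : Matrix (Fin n → Bool) (Fin n → Bool) ℂ)
    (hM₁ : M₁ = (1 / 2 : ℂ) • (Matrix.single x x 1
      + Complex.exp (-(↑β * Complex.I)) • Matrix.single x y 1
      + Complex.exp (↑β * Complex.I) • Matrix.single y x 1
      + Matrix.single y y 1))
    (hM₂ : M₂ = (1 / 2 : ℂ) • (Matrix.single x x 1
      - Complex.exp (-(↑β * Complex.I)) • Matrix.single x y 1
      - Complex.exp (↑β * Complex.I) • Matrix.single y x 1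
      + Matrix.single y y 1))
    (p₁ p₂ : ℝ)
    (hp₁ : p₁ = ((ρ x x).re + (ρ y y).re) / 2
      + ‖ρ x y‖ * Real.exp (-(hammingDist x y : ℝ) * θ))
    (hp₂ : p₂ = ((ρ x x).re + (ρ y y).re) / 2
      - ‖ρ x y‖ * Real.exp (-(hammingDist x y : ℝ) * θ)) :
    (ρθ * M₁).trace = (p₁ : ℂ) ∧ (ρθ * M₂).trace = (p₂ : ℂ) ∧
    0 < p₁ ∧ 0 < p₂ ∧
    0 < ((hammingDist x y : ℝ) * ‖ρ x y‖
          * Real.exp (-(hammingDist x y : ℝ) * θ)) ^ 2 * (1 / p₁ + 1 / p₂) :=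
  nonzero_coherence_positive_fisher_information_general n ρ hρ x y hxy hxy0 β hβ θ hθ ρθ hρθ M₁ M₂
    hM₁ hM₂ p₁ p₂ hp₁ hp₂
end
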